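/- If the parameter vector θ satisfies the strong-hierarchy constraint set S with all weights equal to 1, then θ satisfies the weak-hierarchy constraint set W with weights w_β = |A(β)|; that is, Σ_{α ∈ A(β)} |θ_α| ≥ |A(β)|·|θ_β| for every β ∈ M with A(β) ≠ ∅. -/

import Mathlib

open Finset

/-- The edge relation of the Hasse diagram: `β` is an immediate multiple of `α`,
i.e. `βᵢ ≥ αᵢ` for every `i` and the degrees differ by one. -/
def edge {k : ℕ} (α β : Fin k → ℕ) : Prop :=
  (∀ i, α i ≤ β i) ∧ ∑ i, (β i - α i) = 1

instance {k : ℕ} (α β : Fin k → ℕ) : Decidable (edge α β) := by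
  unfold edge; infer_instance

/-- `B(α)`: the immediate descendants of `α` in the model `M`. -/
def descB {k : ℕ} (M : Finset (Fin k → ℕ)) (α : Fin k → ℕ) : Finset (Fin k → ℕ) :=
  M.filter (fun β => edge α β)

/-- `A(β)`: the immediate ascendants of `β` in the model `M`. -/
def ascA {k : ℕ} (M : Finset (Fin k → ℕ)) (β : Fin k → ℕ) : Finset (Fin k → ℕ) :=
  M.filter (fun α => edge α β)

theorem abs_le_abs_of_mem_ascA {k : ℕ} {M : Finset (Fin k → ℕ)} {θ : (Fin k → ℕ) → ℝ}
    (hS : ∀ α ∈ M, (descB M α).Nonempty → |θ α| ≥ ∑ β ∈ descB M α, |θ β|)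
    {α β : Fin k → ℕ} (hβ : β ∈ M) (hα : α ∈ ascA M β) : |θ β| ≤ |θ α| := by
  obtain ⟨hαM, hedge⟩ := mem_filter.mp hα
  have hβα : β ∈ descB M α := mem_filter.mpr ⟨hβ, hedge⟩
  calc |θ β| ≤ ∑ γ ∈ descB M α, |θ γ| :=
        single_le_sum (f := fun γ => |θ γ|) (fun _ _ => abs_nonneg _) hβα
    _ ≤ |θ α| := hS α hαM ⟨β, hβα⟩

theorem stmt_7_general {k : ℕ} (M : Finset (Fin k → ℕ))
    (θ : (Fin k → ℕ) → ℝ)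
    (hS : ∀ α ∈ M, (descB M α).Nonempty → |θ α| ≥ ∑ β ∈ descB M α, |θ β|) :
    ∀ β ∈ M, (ascA M β).Nonempty →
      ∑ α ∈ ascA M β, |θ α| ≥ ((ascA M β).card : ℝ) * |θ β| := by
  intro β hβ _
  rw [ge_iff_le, ← nsmul_eq_mul]
  exact card_nsmul_le_sum _ _ _ fun α hα => abs_le_abs_of_mem_ascA hS hβ hα

/-- S with unit weights implies W with weights `w_β = |A(β)|`. -/
theorem stmt_7 {k : ℕ} (M : Finset (Fin k → ℕ)) (hM : (0 : Fin k → ℕ) ∉ M)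
    (θ : (Fin k → ℕ) → ℝ)
    (hS : ∀ α ∈ M, (descB M α).Nonempty → |θ α| ≥ ∑ β ∈ descB M α, |θ β|) :
    ∀ β ∈ M, (ascA M β).Nonempty →
      ∑ α ∈ ascA M β, |θ α| ≥ ((ascA M β).card : ℝ) * |θ β| :=
  stmt_7_general M θ hS
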